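/- arXiv:1303.1366 — 11 statements merged into one kernel-verified Lean document; each statement's English description precedes it below -/
import Mathlib

section
/- Let M be a submonoid of the free monoid FreeMonoid A. Suppose that every element w ≠ 1 of M has a unique factorization w = x·y with x irreducible in M and y ∈ M (uniqueness meaning: if w = x·y = x'·y' with x, x' irreducible in M and y, y' ∈ M, then x = x' and y = y'). Then M is free. -/
/-- An element `x` is irreducible in a submonoid `M` of a free monoid: it lies in `M`,
is not the identity, and cannot be written as a product of two non-identity
elements of `M`. -/
def IsIrreducibleIn {A : Type*} (M : Submonoid (FreeMonoid A)) (x : FreeMonoid A) : Prop :=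
  x ∈ M ∧ x ≠ 1 ∧ ∀ y z : FreeMonoid A, y ∈ M → z ∈ M → y ≠ 1 → z ≠ 1 → x ≠ y * z

/-! Every submonoid of a free monoid is generated by its irreducible elements, since an element
that is not irreducible splits into two strictly shorter ones. Hence concatenation maps the free
monoid on the irreducibles of `M` onto `M`, and unique prefix factorization makes this map
injective: two words with the same image agree in their first letter and, inductively, in the
rest. -/

section

open FreeMonoid Submonoid

variable {A : Type*} (M : Submonoid (FreeMonoid A))

theorem closure_setOf_isIrreducibleIn : closure {x | IsIrreducibleIn M x} = M := by
  refine le_antisymm (closure_le.2 fun x hx => hx.1) fun w hw => ?_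
  induction hn : w.length using Nat.strong_induction_on generalizing w with
  | _ n ih =>
  by_cases hw1 : w = 1
  · exact hw1 ▸ one_mem _
  by_cases hirr : IsIrreducibleIn M w
  · exact subset_closure hirr
  obtain ⟨y, z, hy, hz, hy1, hz1, rfl⟩ : ∃ y z, y ∈ M ∧ z ∈ M ∧ y ≠ 1 ∧ z ≠ 1 ∧ w = y * z := by
    simpa [IsIrreducibleIn, hw, hw1] using hirr
  have hy0 : y.length ≠ 0 := mt length_eq_zero.1 hy1
  have hz0 : z.length ≠ 0 := mt length_eq_zero.1 hz1
  rw [length_mul] at hn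
  exact mul_mem (ih _ (by omega) y hy rfl) (ih _ (by omega) z hz rfl)

def concatIrreducibles : FreeMonoid {x // IsIrreducibleIn M x} →* FreeMonoid A :=
  lift Subtype.val

@[simp]
theorem concatIrreducibles_of_mul (x : {x // IsIrreducibleIn M x})
    (l : FreeMonoid {x // IsIrreducibleIn M x}) :
    concatIrreducibles M (of x * l) = x * concatIrreducibles M l := by
  simp [concatIrreducibles]

theorem mrange_concatIrreducibles : MonoidHom.mrange (concatIrreducibles M) = M := by
  rw [concatIrreducibles, mrange_lift, Subtype.range_coe_subtype, closure_setOf_isIrreducibleIn]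

theorem concatIrreducibles_mem (l : FreeMonoid {x // IsIrreducibleIn M x}) :
    concatIrreducibles M l ∈ M :=
  (mrange_concatIrreducibles M).le ⟨l, rfl⟩

theorem concatIrreducibles_of_mul_ne_one (x : {x // IsIrreducibleIn M x})
    (l : FreeMonoid {x // IsIrreducibleIn M x}) :
    concatIrreducibles M (of x * l) ≠ 1 := by
  rw [concatIrreducibles_of_mul, Ne, mul_eq_one']
  exact fun h => x.2.2.1 h.1

theorem concatIrreducibles_injective
    (huniq : ∀ ⦃x x' y y'⦄, IsIrreducibleIn M x → IsIrreducibleIn M x' → y ∈ M → y' ∈ M →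
      x * y = x' * y' → x = x' ∧ y = y') :
    Function.Injective (concatIrreducibles M) := by
  intro l l' he
  induction l using FreeMonoid.inductionOn' generalizing l' with
  | one =>
    cases l' with
    | one => rfl
    | of_mul x' t' => exact absurd he.symm (concatIrreducibles_of_mul_ne_one M x' t')
  | of_mul x t ih =>
    cases l' with
    | one => exact absurd he (concatIrreducibles_of_mul_ne_one M x t)
    | of_mul x' t' =>
      simp only [concatIrreducibles_of_mul] at he
      obtain ⟨hx, ht⟩ := huniq x.2 x'.2 (concatIrreducibles_mem M t)
        (concatIrreducibles_mem M t') he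
      rw [Subtype.ext hx, ih ht]

end

theorem free_of_unique_irreducible_prefix_factorization
    {A : Type u} (M : Submonoid (FreeMonoid A))
    (h : ∀ w ∈ M, w ≠ 1 →
      ∃! p : FreeMonoid A × FreeMonoid A,
        IsIrreducibleIn M p.1 ∧ p.2 ∈ M ∧ w = p.1 * p.2) :
    ∃ B : Type u, Nonempty (M ≃* FreeMonoid B) := by
  have huniq : ∀ ⦃x x' y y'⦄, IsIrreducibleIn M x → IsIrreducibleIn M x' → y ∈ M → y' ∈ M →
      x * y = x' * y' → x = x' ∧ y = y' := by
    intro x x' y y' hx hx' hy hy' he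
    have hxy1 : x * y ≠ 1 := fun h1 => hx.2.1 (mul_eq_one'.1 h1).1
    exact Prod.ext_iff.1 <| (h _ (mul_mem hx.1 hy) hxy1).unique (y₁ := (x, y)) (y₂ := (x', y'))
      ⟨hx, hy, rfl⟩ ⟨hx', hy', he⟩
  refine ⟨_, ⟨(MulEquiv.ofBijective
    ((concatIrreducibles M).codRestrict M (concatIrreducibles_mem M))
    ⟨fun l l' he => concatIrreducibles_injective M huniq (congrArg Subtype.val he), ?_⟩).symm⟩⟩
  rintro ⟨w, hw⟩
  obtain ⟨l, rfl⟩ := (mrange_concatIrreducibles M).ge hw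
  exact ⟨l, rfl⟩
end

section
/- (Schützenberger's criterion) Let M be a submonoid of the free monoid FreeMonoid A. Then M is free if and only if for all words p, q, r ∈ FreeMonoid A, whenever p ∈ M, p·q ∈ M, q·r ∈ M, and r ∈ M, it follows that q ∈ M. -/
/-!
If `M ≃* FreeMonoid B`, then `M` inherits equidivisibility (Levi's lemma) from `FreeMonoid B`;
comparing the factorisations `p · (q r) = (p q) · r` inside `M` gives `p q = p w` or
`p = p q w` with `w ∈ M`, so `q = w ∈ M` or `q = 1`.

Conversely, by induction on length every element of `M` is a product of irreducibles of `M`.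
Stability makes the factorisation unique: if `x s = y t` with `x`, `y` irreducible, equidivisibility
of the words gives, say, `y = x w` and `s = w t`; stability puts `w` in `M`, and irreducibility of
`y` forces `w = 1`. Hence `M` is free on its irreducible elements.
-/

open FreeMonoid

def IsEquidivisible (N : Type*) [Monoid N] : Prop :=
  ∀ a b c d : N, a * b = c * d → ∃ w, (c = a * w ∧ b = w * d) ∨ (a = c * w ∧ d = w * b)

theorem FreeMonoid.isEquidivisible (α : Type*) : IsEquidivisible (FreeMonoid α) := by
  intro a b c d h
  rcases List.append_eq_append_iff.mp (congrArg toList h) with ⟨w, hc, hb⟩ | ⟨w, ha, hd⟩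
  · exact ⟨ofList w, .inl ⟨hc, hb⟩⟩
  · exact ⟨ofList w, .inr ⟨ha, hd⟩⟩

theorem MulEquiv.isEquidivisible {M N : Type*} [Monoid M] [Monoid N] (e : M ≃* N)
    (hN : IsEquidivisible N) : IsEquidivisible M := by
  intro a b c d h
  obtain ⟨w, hw⟩ := hN (e a) (e b) (e c) (e d) (by rw [← map_mul, ← map_mul, h])
  refine ⟨e.symm w, ?_⟩
  simpa only [← e.injective.eq_iff, map_mul, e.apply_symm_apply] using hw

/-- A stable submonoid in the sense of Berstel–Perrin–Reutenauer, *Codes and Automata*. -/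
def Submonoid.IsStable {N : Type*} [Monoid N] (M : Submonoid N) : Prop :=
  ∀ p q r, p ∈ M → p * q ∈ M → q * r ∈ M → r ∈ M → q ∈ M

namespace Submonoid

variable {N : Type*}

theorem eq_one_of_mul_eq_one [CancelMonoid N] [Subsingleton Nˣ] {M : Submonoid N} {x y : M}
    (h : x * y = 1) : x = 1 :=
  Subtype.ext (eq_one_of_mul_right' (congrArg Subtype.val h))

theorem isStable_of_isEquidivisible [CancelMonoid N] [Subsingleton Nˣ] {M : Submonoid N}
    (hM : IsEquidivisible M) : M.IsStable := by
  intro p q r hp hpq hqr hr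
  obtain ⟨w, ⟨hw, -⟩ | ⟨hw, -⟩⟩ :=
    hM ⟨p, hp⟩ ⟨q * r, hqr⟩ ⟨p * q, hpq⟩ ⟨r, hr⟩ (Subtype.ext (mul_assoc p q r).symm)
  · obtain rfl : q = w := mul_left_cancel (congrArg Subtype.val hw)
    exact w.2
  · have hqw : q * w = 1 := mul_left_cancel (a := p) <| by
      rw [mul_one, ← mul_assoc]
      exact (congrArg Subtype.val hw).symm
    rw [eq_one_of_mul_right' hqw]
    exact M.one_mem

theorem IsStable.eq_of_eq_mul [Monoid N] [Subsingleton Nˣ] {M : Submonoid N} (hM : M.IsStable)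
    {x y s t : M} {w : N} (hx : Irreducible x) (hy : Irreducible y) (hyw : (y : N) = x * w)
    (hsw : (s : N) = w * t) : x = y := by
  have hw : w ∈ M := hM x w t x.2 (hyw ▸ y.2) (hsw ▸ s.2) t.2
  have hy_eq : y = x * ⟨w, hw⟩ := Subtype.ext hyw
  rcases hy.isUnit_or_isUnit hy_eq with hxu | hwu
  · exact absurd hxu hx.not_isUnit
  · rw [hy_eq, isUnit_iff_eq_one.mp hwu, mul_one]

theorem IsStable.eq_of_mul_eq_mul [Monoid N] [Subsingleton Nˣ] {M : Submonoid N}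
    (hN : IsEquidivisible N) (hM : M.IsStable) {x y s t : M} (hx : Irreducible x)
    (hy : Irreducible y) (h : x * s = y * t) : x = y := by
  obtain ⟨w, ⟨hyw, hsw⟩ | ⟨hxw, htw⟩⟩ := hN _ _ _ _ (congrArg Subtype.val h)
  · exact hM.eq_of_eq_mul hx hy hyw hsw
  · exact (hM.eq_of_eq_mul hy hx hxw htw).symm

theorem IsStable.injective_lift [CancelMonoid N] [Subsingleton Nˣ] {M : Submonoid N}
    (hN : IsEquidivisible N) (hM : M.IsStable) :
    Function.Injective (FreeMonoid.lift (Subtype.val : {x : M | Irreducible x} → M)) := by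
  intro a b hab
  rw [lift_apply, lift_apply] at hab
  apply toList.injective
  generalize toList a = l₁, toList b = l₂ at hab
  induction l₁ generalizing l₂ with
  | nil =>
    cases l₂ with
    | nil => rfl
    | cons y l₂ =>
      rw [List.map_cons, List.prod_cons] at hab
      exact (y.2.ne_one (eq_one_of_mul_eq_one hab.symm)).elim
  | cons x l₁ ih =>
    cases l₂ with
    | nil =>
      rw [List.map_cons, List.prod_cons] at hab
      exact (x.2.ne_one (eq_one_of_mul_eq_one hab)).elim
    | cons y l₂ =>
      rw [List.map_cons, List.map_cons, List.prod_cons, List.prod_cons] at hab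
      obtain rfl : x = y := Subtype.ext (hM.eq_of_mul_eq_mul hN x.2 y.2 hab)
      rw [ih l₂ (mul_left_cancel hab)]

theorem closure_setOf_irreducible {α : Type*} (M : Submonoid (FreeMonoid α)) :
    closure {x : M | Irreducible x} = ⊤ := by
  refine (eq_top_iff' _).mpr fun m => ?_
  induction hn : (m : FreeMonoid α).length using Nat.strong_induction_on generalizing m with
  | _ n ih =>
  by_cases hm : IsUnit m
  · rw [isUnit_iff_eq_one.mp hm]
    exact one_mem _
  obtain hirr | ⟨a, b, ha, hb, rfl⟩ := irreducible_or_factor hm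
  · exact subset_closure hirr
  have length_pos : ∀ x : M, ¬IsUnit x → 0 < (x : FreeMonoid α).length := fun x hx =>
    Nat.pos_of_ne_zero fun h => hx (isUnit_iff_eq_one.mpr (Subtype.ext (length_eq_zero.mp h)))
  have hlen : ((a * b : M) : FreeMonoid α).length =
      (a : FreeMonoid α).length + (b : FreeMonoid α).length := length_mul _ _
  have ha_pos := length_pos a ha
  have hb_pos := length_pos b hb
  exact mul_mem (ih _ (by omega) a rfl) (ih _ (by omega) b rfl)

noncomputable def IsStable.freeMonoidMulEquiv {α : Type*} {M : Submonoid (FreeMonoid α)}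
    (hM : M.IsStable) : FreeMonoid {x : M | Irreducible x} ≃* M :=
  MulEquiv.ofBijective _
    ⟨hM.injective_lift (FreeMonoid.isEquidivisible α), MonoidHom.mrange_eq_top.mp <| by
      rw [← closure_eq_mrange, closure_setOf_irreducible]⟩

end Submonoid

/-- Schützenberger's criterion: a submonoid of a free monoid is free if and only if
whenever `p`, `p * q`, `q * r`, and `r` all lie in `M`, so does `q`. -/
theorem schutzenberger_criterion {A : Type u} (M : Submonoid (FreeMonoid A)) :
    (∃ B : Type u, Nonempty (M ≃* FreeMonoid B)) ↔
      (∀ p q r : FreeMonoid A, p ∈ M → p * q ∈ M → q * r ∈ M → r ∈ M → q ∈ M) :=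
  ⟨fun ⟨B, ⟨e⟩⟩ =>
      Submonoid.isStable_of_isEquidivisible (e.isEquidivisible (FreeMonoid.isEquidivisible B)),
    fun hM => ⟨_, ⟨(Submonoid.IsStable.freeMonoidMulEquiv hM).symm⟩⟩⟩
end

section
/- Let w be a nonempty word in FreeMonoid A, and let A_w be the submonoid of FreeMonoid A consisting of the empty word together with all words having w as a prefix. Then A_w is free if and only if w is non-overlapping. -/
/-- The submonoid of a free monoid consisting of the empty word together with all
words having `w` as a prefix. -/
def prefixSubmonoid {A : Type*} (w : FreeMonoid A) : Submonoid (FreeMonoid A) where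
  carrier := {u | u = 1 ∨ w.toList <+: u.toList}
  one_mem' := Or.inl rfl
  mul_mem' := by
    rintro a b (rfl | ha) hb
    · simpa using hb
    · right
      exact ha.trans (by rw [FreeMonoid.toList_mul]; exact List.prefix_append _ _)

/-- A word `w` overlaps with itself if `w * x = y * w` for some words `x, y` with
`0 < length y < length w`. -/
def SelfOverlapping {A : Type*} (w : FreeMonoid A) : Prop :=
  ∃ x y : FreeMonoid A, w * x = y * w ∧ 0 < y.length ∧ y.length < w.length

/-!
Forward direction: a free monoid is equidivisible (`ab = cd` forces `c = as` or `a = cs`), and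
so is anything isomorphic to it. If `wx = yw` is a self-overlap, then `w · wx = wy · w` in `A_w`,
so equidivisibility gives `s ∈ A_w` with `wy = ws` or `w = wys`. The first puts `y` in `A_w`
although `0 < |y| < |w|`; the second contradicts `|y| > 0`.

Backward direction: call a nonempty word a block if it starts with `w` and `w` occurs in it at no
other position. Since occurrences of a non-overlapping `w` are at least `|w|` apart, cutting a word
of `A_w` at the occurrences of `w` factors it into blocks, and a product of blocks can be cut back
only at its first block; so `A_w` is freely generated by the blocks.
-/

open FreeMonoid

variable {A : Type*}

theorem FreeMonoid.exists_eq_mul_or_eq_mul_of_mul_eq {a b c d : FreeMonoid A}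
    (h : a * b = c * d) : ∃ s, c = a * s ∨ a = c * s := by
  rw [← toList.injective.eq_iff, toList_mul, toList_mul, List.append_eq_append_iff] at h
  rcases h with ⟨s, hs, -⟩ | ⟨s, hs, -⟩
  · exact ⟨ofList s, Or.inl (toList.injective (by simpa using hs))⟩
  · exact ⟨ofList s, Or.inr (toList.injective (by simpa using hs))⟩

theorem MulEquiv.exists_eq_mul_or_eq_mul_of_mul_eq {M B : Type*} [Monoid M]
    (e : M ≃* FreeMonoid B) {a b c d : M} (h : a * b = c * d) :
    ∃ s, c = a * s ∨ a = c * s := by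
  obtain ⟨s, hs⟩ := FreeMonoid.exists_eq_mul_or_eq_mul_of_mul_eq
    (by simpa only [map_mul] using congrArg e h)
  refine ⟨e.symm s, hs.imp (fun h => e.injective ?_) (fun h => e.injective ?_)⟩ <;>
    simpa using h

noncomputable def Submonoid.closureMulEquivFreeMonoid {M : Type*} [Monoid M] (s : Set M)
    (hs : Function.Injective (FreeMonoid.lift ((↑) : s → M))) :
    Submonoid.closure s ≃* FreeMonoid s :=
  (MulEquiv.submonoidCongr (Submonoid.closure_eq_mrange s)).trans
    (MulEquiv.ofBijective _ ⟨fun _ _ h => hs (congrArg Subtype.val h),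
      MonoidHom.mrangeRestrict_surjective _⟩).symm

theorem not_selfOverlapping_of_mulEquiv {w : FreeMonoid A} {B : Type*}
    (e : prefixSubmonoid w ≃* FreeMonoid B) : ¬ SelfOverlapping w := by
  rintro ⟨x, y, hxy, hy0, hyw⟩
  have mul_mem (v : FreeMonoid A) : w * v ∈ prefixSubmonoid w :=
    Or.inr (by simp [List.prefix_append])
  have w_mem : w ∈ prefixSubmonoid w := by simpa using mul_mem 1
  obtain ⟨⟨s, hs⟩, h | h⟩ := e.exists_eq_mul_or_eq_mul_of_mul_eq
    (a := ⟨w, w_mem⟩) (b := ⟨w * x, mul_mem x⟩) (c := ⟨w * y, mul_mem y⟩)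
    (d := ⟨w, w_mem⟩)
    (Subtype.ext (by simp only [Submonoid.coe_mul, hxy, mul_assoc]))
  · obtain rfl : y = s := mul_left_cancel (congrArg Subtype.val h)
    rcases hs with rfl | hs
    · simp at hy0
    · exact absurd hs.length_le (by simpa [FreeMonoid.length] using hyw)
  · have := congrArg (FreeMonoid.length ∘ Subtype.val) h
    simp only [Function.comp_apply, Submonoid.coe_mul, length_mul] at this
    omega

section Blocks

variable {w b : FreeMonoid A}

theorem length_le_of_prefix_of_prefix_drop (hw : ¬ SelfOverlapping w) {u : List A} {p : ℕ}
    (h₀ : w.toList <+: u) (hp : w.toList <+: u.drop p) (hp0 : 0 < p) : w.toList.length ≤ p := by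
  by_contra! hpw
  have hpu : p ≤ u.length := by have := h₀.length_le; omega
  have hshift : u.take p ++ w.toList <+: u := by
    simpa using (List.prefix_append_right_inj (u.take p)).2 hp
  obtain ⟨x, hx⟩ := List.prefix_of_prefix_length_le h₀ hshift (by simp)
  have hy : (ofList (u.take p)).length = p := List.length_take_of_le hpu
  exact hw ⟨ofList x, ofList (u.take p), toList.injective (by simpa using hx),
    by rwa [hy], by rwa [hy]⟩

def IsBlock (w u : FreeMonoid A) : Prop :=
  u ≠ 1 ∧ w.toList <+: u.toList ∧
    ∀ p, 0 < p → p < u.toList.length → ¬ w.toList <+: u.toList.drop p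

theorem IsBlock.mem (hb : IsBlock w b) : b ∈ prefixSubmonoid w := Or.inr hb.2.1

theorem IsBlock.length_pos (hb : IsBlock w b) : 0 < b.toList.length :=
  List.length_pos_iff.2 (toList.injective.ne hb.1)

theorem IsBlock.not_prefix_drop_mul (hw : ¬ SelfOverlapping w) {c t : FreeMonoid A}
    (hc : IsBlock w c) (ht : t ∈ prefixSubmonoid w) {p : ℕ} (hp0 : 0 < p)
    (hpc : p < c.toList.length) : ¬ w.toList <+: (c * t).toList.drop p := by
  -- An occurrence of `w` at `p` either fits inside the block `c`, or runs past its end and then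
  -- overlaps the occurrence of `w` with which `t` starts.
  intro hocc
  rw [toList_mul, List.drop_append_of_le_length hpc.le] at hocc
  by_cases hfit : p + w.toList.length ≤ c.toList.length
  · refine hc.2.2 p hp0 hpc (List.prefix_of_prefix_length_le hocc (List.prefix_append _ _) ?_)
    simp only [List.length_drop]
    omega
  · rcases ht with rfl | ht
    · have := hocc.length_le
      simp only [toList_one, List.append_nil, List.length_drop] at this
      omega
    · have hnext : w.toList <+: (c.toList.drop p ++ t.toList).drop (c.toList.length - p) := by
        rwa [List.drop_left' (by simp)]
      have := length_le_of_prefix_of_prefix_drop hw hocc hnext (by omega)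
      omega

theorem IsBlock.eq_of_mul_eq (hw : ¬ SelfOverlapping w) {b c s t : FreeMonoid A}
    (hb : IsBlock w b) (hc : IsBlock w c) (hs : s ∈ prefixSubmonoid w)
    (ht : t ∈ prefixSubmonoid w) (h : b * s = c * t) : b = c := by
  wlog hbc : b.toList.length ≤ c.toList.length generalizing b c s t
  · exact (this hc hb ht hs h.symm (by omega)).symm
  rcases hbc.eq_or_lt with hbc | hbc
  · exact toList.injective (List.append_inj (congrArg toList h) hbc).1
  refine absurd ?_ (hc.not_prefix_drop_mul hw ht hb.length_pos hbc)
  rw [← h, toList_mul, List.drop_left' rfl]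
  rcases hs with rfl | hs
  · have := congrArg (List.length ∘ toList) h
    simp only [Function.comp_apply, mul_one, toList_mul, List.length_append] at this
    omega
  · exact hs

theorem eq_of_prod_eq_of_isBlock (hw : ¬ SelfOverlapping w) :
    ∀ {l m : List (FreeMonoid A)}, (∀ b ∈ l, IsBlock w b) → (∀ c ∈ m, IsBlock w c) →
      l.prod = m.prod → l = m
  | [], [], _, _, _ => rfl
  | [], c :: m, _, hm, h => absurd (eq_one_of_mul_right' h.symm) (hm c (by simp)).1
  | b :: l, [], hl, _, h => absurd (eq_one_of_mul_right' h) (hl b (by simp)).1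
  | b :: l, c :: m, hl, hm, h => by
    have prod_mem {l : List (FreeMonoid A)} (hl : ∀ b ∈ l, IsBlock w b) :
        l.prod ∈ prefixSubmonoid w :=
      Submonoid.list_prod_mem _ fun b hb => (hl b hb).mem
    rw [List.forall_mem_cons] at hl hm
    rw [List.prod_cons, List.prod_cons] at h
    obtain rfl := hl.1.eq_of_mul_eq hw hm.1 (prod_mem hl.2) (prod_mem hm.2) h
    rw [eq_of_prod_eq_of_isBlock hw hl.2 hm.2 (mul_left_cancel h)]

theorem mem_closure_setOf_isBlock (hw : ¬ SelfOverlapping w) {u : FreeMonoid A}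
    (hu : u ∈ prefixSubmonoid w) : u ∈ Submonoid.closure {b | IsBlock w b} := by
  induction hn : u.toList.length using Nat.strong_induction_on generalizing u with
  | _ n ih =>
  obtain rfl | hu1 := eq_or_ne u 1
  · exact one_mem _
  have hpre : w.toList <+: u.toList := hu.resolve_left hu1
  by_cases hb : ∀ p, 0 < p → p < u.toList.length → ¬ w.toList <+: u.toList.drop p
  · exact Submonoid.subset_closure ⟨hu1, hpre, hb⟩
  push Not at hb
  obtain ⟨p, hp0, hpu, hocc⟩ := hb
  have hwp := length_le_of_prefix_of_prefix_drop hw hpre hocc hp0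
  rw [← ofList_toList u, ← List.take_append_drop p u.toList, ofList_append]
  refine mul_mem
    (ih p (by omega) (Or.inr (List.prefix_take_iff.2 ⟨hpre, hwp⟩)) (by simp; omega))
    (ih (n - p) (by omega) (Or.inr hocc) (by simp [hn]))

theorem closure_setOf_isBlock (hw : ¬ SelfOverlapping w) :
    Submonoid.closure {b | IsBlock w b} = prefixSubmonoid w :=
  le_antisymm (Submonoid.closure_le.2 fun _ hb => IsBlock.mem hb)
    fun _ => mem_closure_setOf_isBlock hw

theorem injective_lift_isBlock (hw : ¬ SelfOverlapping w) :
    Function.Injective (FreeMonoid.lift ((↑) : {b | IsBlock w b} → FreeMonoid A)) := by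
  intro x y h
  simp only [lift_apply] at h
  have isBlock (z : FreeMonoid {b | IsBlock w b}) : ∀ b ∈ z.toList.map (↑), IsBlock w b := by
    simpa using fun _ hb _ => hb
  have hval := eq_of_prod_eq_of_isBlock hw (isBlock x) (isBlock y) h
  exact toList.injective (List.map_injective_iff.2 Subtype.val_injective hval)

end Blocks

theorem prefixSubmonoid_free_iff_nonoverlapping_general {A : Type u}
    (w : FreeMonoid A) :
    (∃ B : Type u, Nonempty (prefixSubmonoid w ≃* FreeMonoid B)) ↔
      ¬ SelfOverlapping w := by
  refine ⟨fun ⟨_, ⟨e⟩⟩ => not_selfOverlapping_of_mulEquiv e, fun hw => ?_⟩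
  exact ⟨{b | IsBlock w b}, ⟨(MulEquiv.submonoidCongr (closure_setOf_isBlock hw).symm).trans
    (Submonoid.closureMulEquivFreeMonoid _ (injective_lift_isBlock hw))⟩⟩

theorem prefixSubmonoid_free_iff_nonoverlapping {A : Type u}
    (w : FreeMonoid A) (hw : w ≠ 1) :
    (∃ B : Type u, Nonempty (prefixSubmonoid w ≃* FreeMonoid B)) ↔
      ¬ SelfOverlapping w :=
  prefixSubmonoid_free_iff_nonoverlapping_general w
end

section
/- Let A be a type, let w : A → ℕ satisfy w(a) > 0 for all a ∈ A, and let ω : FreeMonoid A → ℕ be the induced weight, ω(a_1⋯a_k) = w(a_1) + ⋯ + w(a_k). Then for every positive integer m, the submonoid of FreeMonoid A consisting of all words u with m ∣ ω(u) is free. -/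
/-!
Call a nonempty word of a submonoid `M` of `FreeMonoid A` a prefix atom of `M` if none of its
proper nonempty prefixes lies in `M`. Two prefix atoms that begin the same word are prefixes of
one another, hence equal; cancelling them shows that products of prefix atoms factor uniquely.
If `M` is right unitary (`u ∈ M` and `u * v ∈ M` imply `v ∈ M`), every nonempty `u ∈ M` is
the product of its shortest nonempty prefix in `M`, a prefix atom, with a shorter element of
`M`, so `M` is freely generated by its prefix atoms. The words of weight divisible by `m` form
a right unitary submonoid, since `m ∣ ω u` and `m ∣ ω u + ω v` give `m ∣ ω v`.
-/

/-- The submonoid of words whose weight is divisible by `m`, where the weight of a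
word is the sum of the weights of its letters. -/
def weightDvdSubmonoid {A : Type*} (w : A → ℕ) (m : ℕ) : Submonoid (FreeMonoid A) where
  carrier := {u | m ∣ (u.toList.map w).sum}
  one_mem' := by simp [FreeMonoid.toList_one]
  mul_mem' := by
    intro a b ha hb
    simp only [Set.mem_setOf_eq, FreeMonoid.toList_mul, List.map_append, List.sum_append]
    exact dvd_add ha hb

namespace FreeMonoid

variable {A : Type*}

theorem dvd_or_dvd_of_mul_eq_mul {a b c d : FreeMonoid A} (h : a * b = c * d) :
    a ∣ c ∨ c ∣ a := by
  rcases List.append_eq_append_iff.mp h with ⟨s, hs, -⟩ | ⟨s, hs, -⟩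
  · exact Or.inl ⟨ofList s, hs⟩
  · exact Or.inr ⟨ofList s, hs⟩

theorem length_lt_length_mul_left {u v : FreeMonoid A} (hv : v ≠ 1) :
    u.length < (u * v).length := by
  rw [length_mul]
  have := length_eq_zero.not.mpr hv
  omega

theorem length_lt_length_mul_right {u v : FreeMonoid A} (hu : u ≠ 1) :
    v.length < (u * v).length := by
  rw [length_mul]
  have := length_eq_zero.not.mpr hu
  omega

variable (M : Submonoid (FreeMonoid A))

/-- In `FreeMonoid A`, `v ∣ u` means `u = v * c` for some `c`, i.e. `v` is a prefix of `u`. -/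
structure IsPrefixAtom (u : FreeMonoid A) : Prop where
  mem : u ∈ M
  ne_one : u ≠ 1
  eq_of_dvd : ∀ v ∈ M, v ≠ 1 → v ∣ u → v = u

variable {M}

theorem IsPrefixAtom.eq_of_mul_eq_mul {b c s t : FreeMonoid A} (hb : IsPrefixAtom M b)
    (hc : IsPrefixAtom M c) (h : b * s = c * t) : b = c ∧ s = t := by
  obtain rfl : b = c := by
    rcases dvd_or_dvd_of_mul_eq_mul h with hbc | hcb
    · exact hc.eq_of_dvd b hb.mem hb.ne_one hbc
    · exact (hb.eq_of_dvd c hc.mem hc.ne_one hcb).symm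
  exact ⟨rfl, mul_left_cancel h⟩

theorem exists_isPrefixAtom_mul {u : FreeMonoid A} (hu : u ∈ M) (hu1 : u ≠ 1) :
    ∃ p r, IsPrefixAtom M p ∧ u = p * r := by
  induction hn : u.length using Nat.strong_induction_on generalizing u with
  | _ n ih =>
  by_cases hproper : ∃ v ∈ M, v ≠ 1 ∧ v ∣ u ∧ v ≠ u
  · obtain ⟨v, hv, hv1, ⟨c, rfl⟩, hvu⟩ := hproper
    have hc1 : c ≠ 1 := by
      rintro rfl
      exact hvu (mul_one v).symm
    obtain ⟨p, r, hp, rfl⟩ := ih _ (hn ▸ length_lt_length_mul_left hc1) hv hv1 rfl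
    exact ⟨p, r * c, hp, mul_assoc p r c⟩
  · have hatom : IsPrefixAtom M u :=
      ⟨hu, hu1, fun v hv hv1 hvu => by_contra fun hne => hproper ⟨v, hv, hv1, hvu, hne⟩⟩
    exact ⟨u, 1, hatom, (mul_one u).symm⟩

variable (M) in
def prefixAtomsHom : FreeMonoid {u // IsPrefixAtom M u} →* M :=
  lift fun b => ⟨b.1, b.2.mem⟩

theorem coe_prefixAtomsHom_of_mul (b : {u // IsPrefixAtom M u})
    (x : FreeMonoid {u // IsPrefixAtom M u}) :
    (prefixAtomsHom M (of b * x) : FreeMonoid A) = b.1 * prefixAtomsHom M x := by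
  rw [map_mul]
  rfl

theorem prefixAtomsHom_of_mul_ne_one (b : {u // IsPrefixAtom M u})
    (x : FreeMonoid {u // IsPrefixAtom M u}) : prefixAtomsHom M (of b * x) ≠ 1 := fun h =>
  b.2.ne_one (mul_eq_one'.mp ((coe_prefixAtomsHom_of_mul b x).symm.trans congr($h.1))).1

theorem prefixAtomsHom_injective : Function.Injective (prefixAtomsHom M) := by
  intro x
  induction x using FreeMonoid.inductionOn' with
  | one =>
    intro y h
    cases y using FreeMonoid.casesOn with
    | one => rfl
    | of_mul c t => exact absurd (h.symm.trans (map_one _)) (prefixAtomsHom_of_mul_ne_one c t)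
  | of_mul b s ih =>
    intro y h
    cases y using FreeMonoid.casesOn with
    | one => exact absurd (h.trans (map_one _)) (prefixAtomsHom_of_mul_ne_one b s)
    | of_mul c t =>
      have h' := congr($h.1)
      rw [coe_prefixAtomsHom_of_mul, coe_prefixAtomsHom_of_mul] at h'
      obtain ⟨hbc, hst⟩ := b.2.eq_of_mul_eq_mul c.2 h'
      rw [Subtype.ext hbc, ih (Subtype.ext hst)]

theorem prefixAtomsHom_surjective (hM : ∀ {u v}, u ∈ M → u * v ∈ M → v ∈ M) :
    Function.Surjective (prefixAtomsHom M) := by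
  rintro ⟨u, hu⟩
  induction hn : u.length using Nat.strong_induction_on generalizing u with
  | _ n ih =>
  rcases eq_or_ne u 1 with rfl | hu1
  · exact ⟨1, map_one _⟩
  obtain ⟨p, r, hp, rfl⟩ := exists_isPrefixAtom_mul hu hu1
  obtain ⟨x, hx⟩ := ih _ (hn ▸ length_lt_length_mul_right hp.ne_one) r (hM hp.mem hu) rfl
  exact ⟨of ⟨p, hp⟩ * x, Subtype.ext (by rw [coe_prefixAtomsHom_of_mul, hx])⟩

noncomputable def prefixAtomsMulEquiv (hM : ∀ {u v}, u ∈ M → u * v ∈ M → v ∈ M) :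
    FreeMonoid {u // IsPrefixAtom M u} ≃* M :=
  .ofBijective (prefixAtomsHom M) ⟨prefixAtomsHom_injective, prefixAtomsHom_surjective hM⟩

end FreeMonoid

theorem mem_weightDvdSubmonoid_of_mul_mem {A : Type*} {w : A → ℕ} {m : ℕ} {u v : FreeMonoid A}
    (hu : u ∈ weightDvdSubmonoid w m) (huv : u * v ∈ weightDvdSubmonoid w m) :
    v ∈ weightDvdSubmonoid w m := by
  change m ∣ _ at hu huv ⊢
  rw [FreeMonoid.toList_mul, List.map_append, List.sum_append] at huv
  exact (Nat.dvd_add_right hu).mp huv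

theorem weightDvdSubmonoid_free_general {A : Type u} (w : A → ℕ) (m : ℕ) :
    ∃ B : Type u, Nonempty (weightDvdSubmonoid w m ≃* FreeMonoid B) :=
  ⟨_, ⟨(FreeMonoid.prefixAtomsMulEquiv mem_weightDvdSubmonoid_of_mul_mem).symm⟩⟩

theorem weightDvdSubmonoid_free {A : Type u} (w : A → ℕ) (hw : ∀ a, 0 < w a)
    (m : ℕ) (hm : 0 < m) :
    ∃ B : Type u, Nonempty (weightDvdSubmonoid w m ≃* FreeMonoid B) :=
  weightDvdSubmonoid_free_general w m
end

section
/- Let p and q be distinct positive integers. Then for every n ≥ p, the number of compositions of n − p all of whose parts belong to {p, q} is equal to the number of compositions of n all of whose parts are of the form p + q·i for some i ∈ ℕ. -/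
/-!
Read a `{p, q}`-composition `w` of `n - p` after a leading `p`: every `p` opens a new part and
every `q` is added to the current one. This turns `p :: w` into a composition of `n` whose parts
are `p + q * i`, where `i` is the length of the run of `q`s following the `p` that opened the
part. Conversely such a part expands back to `p` followed by `i` copies of `q`, and since
`p ≠ q` the two operations are mutually inverse.
-/

def groupParts (q : ℕ) : ℕ → List ℕ → List ℕ
  | a, [] => [a]
  | a, b :: w => if b = q then groupParts q (a + q) w else a :: groupParts q b w

def expandParts (p q : ℕ) (l : List ℕ) : List ℕ :=
  l.flatMap fun a => p :: List.replicate ((a - p) / q) q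

section

variable {p q : ℕ}

@[simp]
lemma expandParts_cons (a : ℕ) (l : List ℕ) :
    expandParts p q (a :: l) = p :: (List.replicate ((a - p) / q) q ++ expandParts p q l) := by
  simp [expandParts]

lemma sum_groupParts (a : ℕ) (w : List ℕ) : (groupParts q a w).sum = a + w.sum := by
  induction w generalizing a with
  | nil => simp [groupParts]
  | cons b w ih =>
    by_cases hb : b = q
    · simp only [groupParts, hb, if_true, ih, List.sum_cons]
      ring
    · simp [groupParts, hb, ih]

lemma groupParts_replicate_append (a i : ℕ) (w : List ℕ) :
    groupParts q a (List.replicate i q ++ w) = groupParts q (a + q * i) w := by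
  induction i generalizing a with
  | zero => simp
  | succ i ih =>
    rw [List.replicate_succ, List.cons_append, groupParts, if_pos rfl, ih]
    ring_nf

lemma exists_eq_add_mul_of_mem_groupParts {w : List ℕ} (hw : ∀ b ∈ w, b = p ∨ b = q) {i a : ℕ}
    (ha : a ∈ groupParts q (p + q * i) w) : ∃ j, a = p + q * j := by
  induction w generalizing i with
  | nil => exact ⟨i, List.eq_of_mem_singleton ha⟩
  | cons b w ih =>
    have hw' : ∀ c ∈ w, c = p ∨ c = q := fun c hc => hw c (List.mem_cons_of_mem b hc)
    by_cases hbq : b = q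
    · rw [groupParts, if_pos hbq, add_assoc, ← mul_add_one] at ha
      exact ih hw' ha
    · have hbp : b = p := (hw b List.mem_cons_self).resolve_right hbq
      rw [groupParts, if_neg hbq, List.mem_cons] at ha
      rcases ha with rfl | ha
      · exact ⟨i, rfl⟩
      · exact ih hw' (i := 0) (by simpa [hbp] using ha)

lemma expandParts_groupParts (hq : 0 < q) (hpq : p ≠ q) {w : List ℕ}
    (hw : ∀ b ∈ w, b = p ∨ b = q) (i : ℕ) : expandParts p q (groupParts q (p + q * i) w) = p :: (List.replicate i q ++ w) := by
  induction w generalizing i with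
  | nil => simp [groupParts, expandParts, hq]
  | cons b w ih =>
    have hw' : ∀ c ∈ w, c = p ∨ c = q := fun c hc => hw c (List.mem_cons_of_mem b hc)
    by_cases hbq : b = q
    · rw [groupParts, if_pos hbq, add_assoc, ← mul_add_one, ih hw', hbq,
        List.replicate_succ', List.append_assoc, List.singleton_append]
    · have hbp : b = p := (hw b List.mem_cons_self).resolve_right hbq
      have := ih hw' 0
      simp only [mul_zero, add_zero, List.replicate_zero, List.nil_append] at this
      rw [hbp, groupParts, if_neg hpq, expandParts_cons, this, Nat.add_sub_cancel_left,
        Nat.mul_div_cancel_left i hq]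

lemma groupParts_inj (hq : 0 < q) (hpq : p ≠ q) {w₁ w₂ : List ℕ}
    (hw₁ : ∀ b ∈ w₁, b = p ∨ b = q) (hw₂ : ∀ b ∈ w₂, b = p ∨ b = q)
    (h : groupParts q p w₁ = groupParts q p w₂) : w₁ = w₂ := by
  have h₁ := expandParts_groupParts hq hpq hw₁ 0
  have h₂ := expandParts_groupParts hq hpq hw₂ 0
  simp only [mul_zero, add_zero, List.replicate_zero, List.nil_append] at h₁ h₂
  exact List.cons_injective (h₁.symm.trans (h ▸ h₂))

lemma exists_groupParts_eq_cons (hpq : p ≠ q) {l : List ℕ} (hl : ∀ a ∈ l, ∃ j, a = p + q * j)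
    (i : ℕ) : ∃ w, (∀ b ∈ w, b = p ∨ b = q) ∧ groupParts q p w = (p + q * i) :: l := by
  induction l generalizing i with
  | nil => exact ⟨List.replicate i q, by simp, by
    rw [← List.append_nil (List.replicate i q), groupParts_replicate_append, groupParts]⟩
  | cons a l ih =>
    obtain ⟨j, rfl⟩ := hl a List.mem_cons_self
    obtain ⟨w, hw, hgw⟩ := ih (fun b hb => hl b (List.mem_cons_of_mem _ hb)) j
    refine ⟨List.replicate i q ++ p :: w, ?_, ?_⟩
    · simp only [List.mem_append, List.mem_replicate, List.mem_cons]
      rintro b (⟨-, rfl⟩ | rfl | hb)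
      exacts [Or.inr rfl, Or.inl rfl, hw b hb]
    · rw [groupParts_replicate_append, groupParts, if_neg hpq, hgw]

lemma exists_groupParts_eq (hpq : p ≠ q) {l : List ℕ} (hl : ∀ a ∈ l, ∃ j, a = p + q * j)
    (hne : l ≠ []) : ∃ w, (∀ b ∈ w, b = p ∨ b = q) ∧ groupParts q p w = l := by
  obtain ⟨a, l, rfl⟩ := List.exists_cons_of_ne_nil hne
  obtain ⟨i, rfl⟩ := hl a List.mem_cons_self
  exact exists_groupParts_eq_cons hpq (fun b hb => hl b (List.mem_cons_of_mem _ hb)) i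

variable {n : ℕ}

def groupComposition (hp : 0 < p) (hn : p ≤ n) :
    {c : Composition (n - p) // ∀ a ∈ c.blocks, a = p ∨ a = q} →
      {c : Composition n // ∀ a ∈ c.blocks, ∃ i : ℕ, a = p + q * i}
  | ⟨c, hc⟩ =>
    have hmem : ∀ a ∈ groupParts q p c.blocks, ∃ i : ℕ, a = p + q * i := fun _ ha =>
      exists_eq_add_mul_of_mem_groupParts hc (i := 0) (by simpa using ha)
    ⟨⟨groupParts q p c.blocks, fun ha => by obtain ⟨j, rfl⟩ := hmem _ ha; omega,
      by rw [sum_groupParts, c.blocks_sum]; omega⟩, hmem⟩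

lemma groupComposition_injective (hp : 0 < p) (hq : 0 < q) (hpq : p ≠ q) (hn : p ≤ n) :
    Function.Injective (groupComposition (q := q) hp hn) := by
  rintro ⟨c₁, hc₁⟩ ⟨c₂, hc₂⟩ h
  exact Subtype.ext (Composition.ext
    (groupParts_inj hq hpq hc₁ hc₂ (congrArg (fun c => c.1.blocks) h)))

lemma groupComposition_surjective (hp : 0 < p) (hq : 0 < q) (hpq : p ≠ q) (hn : p ≤ n) :
    Function.Surjective (groupComposition (q := q) hp hn) := by
  rintro ⟨c, hc⟩
  have hne : c.blocks ≠ [] := fun h => by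
    have := c.blocks_sum
    simp only [h, List.sum_nil] at this
    omega
  obtain ⟨w, hw, hgw⟩ := exists_groupParts_eq hpq hc hne
  have hsum : p + w.sum = n := by rw [← sum_groupParts, hgw, c.blocks_sum]
  refine ⟨⟨⟨w, fun hb => by rcases hw _ hb with rfl | rfl <;> assumption, by omega⟩, hw⟩, ?_⟩
  exact Subtype.ext (Composition.ext hgw)

end

theorem compositions_two_parts_eq_compositions_arithmetic
    (p q : ℕ) (hp : 0 < p) (hq : 0 < q) (hpq : p ≠ q) (n : ℕ) (hn : p ≤ n) :
    Nat.card {c : Composition (n - p) // ∀ a ∈ c.blocks, a = p ∨ a = q} =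
      Nat.card {c : Composition n // ∀ a ∈ c.blocks, ∃ i : ℕ, a = p + q * i} :=
  Nat.card_eq_of_bijective _
    ⟨groupComposition_injective hp hq hpq hn, groupComposition_surjective hp hq hpq hn⟩
end

section
/- Fix an integer k ≥ 2, and let c : ℕ → ℤ be the sequence determined by the formal power series equation (1 − X − X² + X^k) · (Σ_{n≥0} c_n X^n) = X^k in ℤ⟦X⟧. Then for every n ≥ 1, the sum over all compositions (a_1, …, a_k') of n of the products c_{a_1} c_{a_2} ⋯ c_{a_{k'}} equals F_{n−k+1} if n ≥ k, and equals 0 if 1 ≤ n < k. -/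
/-!
Splitting off the first block gives `S_{n+1} = ∑_{j ≤ n} c_{n+1-j} S_j` for the composition
sums `S_n`, so `∑ S_n X^n = 1 / (1 - C)` with `C = ∑ c_n X^n` (here `c_0 = 0` is needed).
The hypothesis says `1 - C = (1 - X - X²) / (1 - X - X² + X^k)`, hence
`∑ S_n X^n = 1 + X^k / (1 - X - X²)`, and `1 / (1 - X - X²) = ∑ F_{m+1} X^m`.
-/

open PowerSeries

namespace Composition

def consEquiv (n : ℕ) : (Σ j : Fin (n + 1), Composition j) ≃ Composition (n + 1) where
  toFun x :=
    { blocks := (n + 1 - x.1) :: x.2.blocks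
      blocks_pos := by
        rintro i (_ | ⟨_, hi⟩)
        · omega
        · exact x.2.blocks_pos hi
      blocks_sum := by simp only [List.sum_cons, x.2.blocks_sum]; omega }
  invFun comp :=
    ⟨⟨comp.blocks.tail.sum, by
      obtain ⟨a, t, hb⟩ := List.exists_cons_of_ne_nil (comp.blocks_eq_nil.not.2 n.succ_ne_zero)
      have := comp.blocks_sum
      have := comp.one_le_blocks (hb ▸ List.mem_cons_self)
      simp_all only [List.tail_cons, List.sum_cons]
      omega⟩,
     ⟨comp.blocks.tail, fun hi => comp.blocks_pos (List.mem_of_mem_tail hi), rfl⟩⟩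
  left_inv := by
    rintro ⟨⟨j, hj⟩, d, hpos, hsum⟩
    dsimp only at hsum
    subst hsum
    rfl
  right_inv := by
    rintro ⟨_ | ⟨a, t⟩, hpos, hsum⟩
    · simp at hsum
    · ext1
      simp only [List.sum_cons] at hsum
      simp only [List.tail_cons, List.cons.injEq, and_true]
      omega

end Composition

section CompositionProdSum

variable {R : Type*} [CommSemiring R]

def compositionProdSum (c : ℕ → R) (n : ℕ) : R :=
  ∑ comp : Composition n, (comp.blocks.map c).prod

theorem compositionProdSum_zero (c : ℕ → R) : compositionProdSum c 0 = 1 := by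
  have hnil (comp : Composition 0) : comp.blocks = [] := comp.blocks_eq_nil.2 rfl
  simp [compositionProdSum, hnil, composition_card]

theorem compositionProdSum_succ (c : ℕ → R) (n : ℕ) :
    compositionProdSum c (n + 1) =
      ∑ j ∈ Finset.range (n + 1), c (n + 1 - j) * compositionProdSum c j := by
  rw [compositionProdSum, ← (Composition.consEquiv n).sum_comp, Fintype.sum_sigma,
    ← Fin.sum_univ_eq_sum_range]
  simp [Composition.consEquiv, compositionProdSum, Finset.mul_sum]

theorem mk_compositionProdSum_eq_one_add_mul (c : ℕ → R) (hc : c 0 = 0) :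
    mk (compositionProdSum c) = 1 + mk c * mk (compositionProdSum c) := by
  ext (_ | n)
  · simp [compositionProdSum_zero, hc]
  · rw [map_add, coeff_mul, ← Finset.Nat.sum_antidiagonal_swap]
    simp only [Prod.fst_swap, Prod.snd_swap, coeff_mk]
    rw [Finset.Nat.sum_antidiagonal_eq_sum_range_succ (fun j i => c i * compositionProdSum c j),
      Finset.sum_range_succ]
    simp [hc, compositionProdSum_succ]

end CompositionProdSum

section GeneratingFunction

variable {R : Type*} [CommRing R]

theorem one_sub_X_sub_X_sq_mul_mk_fib :
    (1 - X - X ^ 2 : R⟦X⟧) * mk (fun m => (Nat.fib (m + 1) : R)) = 1 := by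
  ext (_ | _ | n)
  · simp
  · simp [sub_mul, coeff_succ_X_mul, pow_two, mul_assoc]
  · simp [sub_mul, coeff_succ_X_mul, pow_two, mul_assoc, Nat.fib_add_two, coeff_one]

theorem mk_compositionProdSum_of_mul_eq_X_pow {k : ℕ} {c : ℕ → R} (hc0 : c 0 = 0)
    (hc : (1 - X - X ^ 2 + X ^ k : R⟦X⟧) * mk c = X ^ k) :
    mk (compositionProdSum c) = 1 + X ^ k * mk (fun m => (Nat.fib (m + 1) : R)) := by
  -- With `P = 1 - X - X²`, `Q = P + X^k` and `F = P⁻¹`, no division is needed: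
  -- `S - 1 = F P (S - 1)` and `P S = Q (1 - C) S = Q`.
  have hS : (1 - mk c) * mk (compositionProdSum c) = 1 := by
    linear_combination mk_compositionProdSum_eq_one_add_mul c hc0
  linear_combination (1 - mk (compositionProdSum c)) * one_sub_X_sub_X_sq_mul_mk_fib (R := R)
    + mk (fun m => (Nat.fib (m + 1) : R)) * (1 - X - X ^ 2 + X ^ k) * hS
    + mk (fun m => (Nat.fib (m + 1) : R)) * mk (compositionProdSum c) * hc

end GeneratingFunction

theorem coeff_zero_eq_zero_of_mul_eq_X_pow {k : ℕ} {c : ℕ → ℤ}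
    (hc : (1 - X - X ^ 2 + X ^ k : ℤ⟦X⟧) * mk c = X ^ k) : c 0 = 0 := by
  -- for k = 0 the constant coefficient reads 2 * c 0 = 1
  have h := congrArg constantCoeff hc
  rcases k with _ | k <;> simp at h <;> omega

theorem sum_over_compositions_prime_gf_fib_general
    (k : ℕ) (c : ℕ → ℤ)
    (hc : (1 - X - X ^ 2 + X ^ k : PowerSeries ℤ) * PowerSeries.mk c = X ^ k)
    (n : ℕ) (hn : 1 ≤ n) :
    ∑ comp : Composition n, (comp.blocks.map c).prod =
      if k ≤ n then (Nat.fib (n - k + 1) : ℤ) else 0 := by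
  have h := congrArg (coeff n)
    (mk_compositionProdSum_of_mul_eq_X_pow (coeff_zero_eq_zero_of_mul_eq_X_pow hc) hc)
  rw [coeff_mk, map_add, coeff_X_pow_mul', coeff_one, if_neg (by omega)] at h
  simpa [compositionProdSum, apply_ite] using h

theorem sum_over_compositions_prime_gf_fib
    (k : ℕ) (hk : 2 ≤ k) (c : ℕ → ℤ)
    (hc : (1 - X - X ^ 2 + X ^ k : PowerSeries ℤ) * PowerSeries.mk c = X ^ k)
    (n : ℕ) (hn : 1 ≤ n) :
    ∑ comp : Composition n, (comp.blocks.map c).prod =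
      if k ≤ n then (Nat.fib (n - k + 1) : ℤ) else 0 :=
  sum_over_compositions_prime_gf_fib_general k c hc n hn
end

section
/- For every integer m ≥ 1, the following identity holds in ℤ⟦X⟧: (Σ_{n≥0} F_{mn+1} X^n) · ((1 − F_{m−1}·X)·(1 − F_{m+1}·X) − F_m²·X²) = 1 − F_{m−1}·X. (Equivalently, Σ_{n≥0} F_{mn+1} x^n = (1 − F_{m+1}x − F_m² x²/(1 − F_{m−1}x))^{−1}.) -/
/-! The sequence `u n = F (m n + 1)` satisfies the second-order recurrence
`u (n + 2) = L u (n + 1) - c u n` with `L = F (m - 1) + F (m + 1)` and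
`c = F (m - 1) F (m + 1) - F m ^ 2` (the Cassini sign `(-1) ^ m`); this follows from two applications
of the addition formula for Fibonacci numbers. A sequence with such a recurrence has a rational generating
function with denominator `1 - L X + c X ^ 2 = (1 - F (m - 1) X) (1 - F (m + 1) X) - F m ^ 2 X ^ 2`,
and the numerator is read off from `u 0 = 1`, `u 1 = F (m + 1)`. -/

open PowerSeries

lemma PowerSeries.mk_mul_eq_of_recurrence {R : Type*} [CommRing R] (u : ℕ → R) (p q : R)
    (hu : ∀ n, u (n + 2) = p * u (n + 1) - q * u n) :
    mk u * (1 - C p * X + C q * X ^ 2) = C (u 0) + C (u 1 - p * u 0) * X := by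
  have expand : mk u * (1 - C p * X + C q * X ^ 2) =
      mk u - C p * (mk u * X) + C q * (mk u * X ^ 2) := by
    ring
  rw [expand]
  ext (_ | _ | n)
  · simp
  · simp [coeff_mul_X_pow']
  · have hX2 : coeff (n + 1 + 1) (mk u * X ^ 2) = u n :=
      (coeff_mul_X_pow (mk u) 2 n).trans (coeff_mk n u)
    simp only [map_add, map_sub, coeff_C_mul, coeff_mk, coeff_succ_mul_X, hX2, coeff_C, hu]
    simp

lemma Nat.fib_add_two_mul (k m : ℕ) :
    (fib (k + 2 * m) : ℤ) =
      (fib (m - 1) + fib (m + 1)) * fib (k + m) - (fib (m - 1) * fib (m + 1) - fib m ^ 2) * fib k := by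
  rcases m with _ | j
  · simp
  · have hk : k + 2 * (j + 1) = (k + j + 1) + j + 1 := by ring
    have hkj : fib (k + j + 1 + 1) = fib k * fib (j + 1) + fib (k + 1) * fib (j + 1 + 1) :=
      fib_add k (j + 1)
    rw [hk, fib_add, hkj, add_tsub_cancel_right, ← add_assoc, fib_add, fib_add_two]
    push_cast
    ring

theorem fib_multisection_gf_m0_general (m : ℕ) :
    (PowerSeries.mk fun n => (Nat.fib (m * n + 1) : ℤ)) *
        ((1 - (C : ℤ →+* PowerSeries ℤ) (Nat.fib (m - 1)) * X) * (1 - (C : ℤ →+* PowerSeries ℤ) (Nat.fib (m + 1)) * X) -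
          (C : ℤ →+* PowerSeries ℤ) ((Nat.fib m : ℤ) ^ 2) * X ^ 2) =
      1 - (C : ℤ →+* PowerSeries ℤ) (Nat.fib (m - 1)) * X := by
  set a : ℤ := (Nat.fib (m - 1) : ℤ)
  set b : ℤ := (Nat.fib (m + 1) : ℤ)
  have hrec : ∀ n, (Nat.fib (m * (n + 2) + 1) : ℤ) =
      (a + b) * Nat.fib (m * (n + 1) + 1) - (a * b - (Nat.fib m : ℤ) ^ 2) * Nat.fib (m * n + 1) := by
    intro n
    rw [show m * (n + 2) + 1 = (m * n + 1) + 2 * m by ring,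
      show m * (n + 1) + 1 = (m * n + 1) + m by ring]
    exact Nat.fib_add_two_mul _ _
  have hfactor : (1 - C a * X) * (1 - C b * X) - C ((Nat.fib m : ℤ) ^ 2) * X ^ 2 =
      1 - C (a + b) * X + C (a * b - (Nat.fib m : ℤ) ^ 2) * X ^ 2 := by
    simp only [map_add, map_sub, map_mul]
    ring
  rw [hfactor, mk_mul_eq_of_recurrence _ _ _ hrec]
  simp only [mul_zero, zero_add, mul_one, Nat.fib_one, Nat.cast_one, map_one]
  rw [show b - (a + b) = -a by ring, map_neg, neg_mul, sub_eq_add_neg]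

theorem fib_multisection_gf_m0 (m : ℕ) (hm : 1 ≤ m) :
    (PowerSeries.mk fun n => (Nat.fib (m * n + 1) : ℤ)) *
        ((1 - (C : ℤ →+* PowerSeries ℤ) (Nat.fib (m - 1)) * X) * (1 - (C : ℤ →+* PowerSeries ℤ) (Nat.fib (m + 1)) * X) -
          (C : ℤ →+* PowerSeries ℤ) ((Nat.fib m : ℤ) ^ 2) * X ^ 2) =
      1 - (C : ℤ →+* PowerSeries ℤ) (Nat.fib (m - 1)) * X :=
  fib_multisection_gf_m0_general m
end

section
/- Fix an integer k ≥ 1, and let d : ℕ → ℤ be the sequence determined by the formal power series equation (1 − 3X + X² + X^k) · (Σ_{n≥0} d_n X^n) = X^k in ℤ⟦X⟧. Then for every n ≥ 1, the sum over all compositions (a_1, …, a_{k'}) of n of the products d_{a_1} d_{a_2} ⋯ d_{a_{k'}} equals F_{2n−2k+2} if n ≥ k, and equals 0 if 1 ≤ n < k. -/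
/-!
Write `D = ∑ dₙ Xⁿ` and `T = ∑ₙ (∑_{c ∈ C(n)} ∏ d_{cᵢ}) Xⁿ`. Splitting off the first block of a
composition gives `(1 - D) T = 1` (here `d₀ = 0`). With `Q = 1 - 3X + X²` the hypothesis reads
`(Q + Xᵏ) D = Xᵏ`, and eliminating `D` gives `Q (T - 1) = Xᵏ`. Since `Q · ∑ F₂ₙ Xⁿ = X` and `Q` is a
unit, `T - 1 = Xᵏ⁻¹ ∑ F₂ₙ Xⁿ`.
-/

open PowerSeries Finset

namespace Composition

def cons {m : ℕ} (a : ℕ) (c : Composition m) : Composition (a + 1 + m) where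
  blocks := (a + 1) :: c.blocks
  blocks_pos := by
    rintro i (_ | ⟨_, hi⟩)
    exacts [a.succ_pos, c.blocks_pos hi]
  blocks_sum := by simp [c.blocks_sum]

theorem exists_blocks_eq_cons {n : ℕ} (c : Composition (n + 1)) :
    ∃ (a m : ℕ) (c' : Composition m), a + m = n ∧ c.blocks = (a + 1) :: c'.blocks := by
  obtain ⟨b, l, hc⟩ := List.exists_cons_of_ne_nil (c.blocks_eq_nil.not.mpr n.succ_ne_zero)
  have hb : 1 ≤ b := c.one_le_blocks (hc ▸ List.mem_cons_self)
  have hsum := c.blocks_sum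
  rw [hc, List.sum_cons] at hsum
  refine ⟨b - 1, l.sum, ⟨l, fun hi => c.blocks_pos (hc ▸ List.mem_cons_of_mem _ hi), rfl⟩,
    by omega, ?_⟩
  simp [hc, Nat.sub_add_cancel hb]

end Composition

section CompositionSum

variable {R : Type*}

def compositionSum [Semiring R] (d : ℕ → R) (n : ℕ) : R :=
  ∑ c : Composition n, (c.blocks.map d).prod

theorem compositionSum_zero [Semiring R] (d : ℕ → R) : compositionSum d 0 = 1 := by
  have hblocks (c : Composition 0) : c.blocks = [] := c.blocks_eq_nil.mpr rfl
  simp [compositionSum, hblocks, composition_card]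

theorem compositionSum_succ [Semiring R] (d : ℕ → R) (n : ℕ) :
    compositionSum d (n + 1) = ∑ p ∈ antidiagonal n, d (p.1 + 1) * compositionSum d p.2 := by
  simp_rw [compositionSum, mul_sum]
  rw [sum_sigma']
  symm
  refine sum_bij (fun x hx => (x.2.cons x.1.1).cast (by simpa [add_right_comm] using hx))
    (fun _ _ => mem_univ _) ?_ ?_ (fun _ _ => by simp [Composition.cons])
  · rintro ⟨⟨a, m⟩, c⟩ hc ⟨⟨a', m'⟩, c'⟩ hc' h
    simp only [mem_sigma, HasAntidiagonal.mem_antidiagonal, mem_univ, and_true] at hc hc'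
    obtain ⟨rfl, hb⟩ : a = a' ∧ c.blocks = c'.blocks := by
      simpa [Composition.ext_iff, Composition.cons] using h
    obtain rfl : m = m' := by omega
    simp [Composition.ext hb]
  · intro c _
    obtain ⟨a, m, c', h, hc⟩ := c.exists_blocks_eq_cons
    exact ⟨⟨(a, m), c'⟩, by simpa using h, Composition.ext (by simp [Composition.cons, hc])⟩

theorem one_sub_mk_mul_mk_compositionSum [Ring R] {d : ℕ → R} (hd : d 0 = 0) :
    (1 - mk d) * mk (compositionSum d) = 1 := by
  ext n
  rcases n with _ | n
  · simp [compositionSum_zero, hd]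
  · rw [sub_mul, one_mul, map_sub, coeff_mul, Nat.sum_antidiagonal_succ]
    simp [compositionSum_succ, hd]

end CompositionSum

theorem Nat.fib_add_four_add (n : ℕ) : fib (n + 4) + fib n = 3 * fib (n + 2) := by
  simp only [fib_add_two]
  omega

theorem one_sub_three_mul_X_add_X_sq_mul_mk_fib_two_mul {R : Type*} [CommRing R] :
    (1 - 3 * X + X ^ 2 : R⟦X⟧) * mk (fun n => (Nat.fib (2 * n) : R)) = X := by
  rw [show (3 : R⟦X⟧) = C 3 from (map_ofNat C 3).symm]
  ext n
  rcases n with _ | _ | n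
  · simp
  · simp [sub_mul, add_mul, mul_assoc, coeff_X_pow_mul']
  · have h : (Nat.fib (2 * n + 4) : R) + Nat.fib (2 * n) = 3 * Nat.fib (2 * n + 2) := by
      exact_mod_cast congrArg (Nat.cast : ℕ → R) (Nat.fib_add_four_add (2 * n))
    simp only [sub_mul, add_mul, one_mul, pow_two, mul_assoc, map_add, map_sub, coeff_C_mul,
      coeff_succ_X_mul, coeff_mk, coeff_X, if_neg (show n + 1 + 1 ≠ 1 by omega)]
    linear_combination h

theorem sum_over_compositions_bisection_prime_gf
    (k : ℕ) (hk : 1 ≤ k) (d : ℕ → ℤ)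
    (hd : (1 - 3 * X + X ^ 2 + X ^ k : PowerSeries ℤ) * PowerSeries.mk d = X ^ k)
    (n : ℕ) (hn : 1 ≤ n) :
    ∑ comp : Composition n, (comp.blocks.map d).prod =
      if k ≤ n then (Nat.fib (2 * n - 2 * k + 2) : ℤ) else 0 := by
  obtain ⟨j, rfl⟩ : ∃ j, k = j + 1 := ⟨k - 1, by omega⟩
  have hd0 : d 0 = 0 := by simpa using congrArg constantCoeff hd
  set Q : ℤ⟦X⟧ := 1 - 3 * X + X ^ 2
  set T : ℤ⟦X⟧ := mk (compositionSum d)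
  set F : ℤ⟦X⟧ := mk fun n => (Nat.fib (2 * n) : ℤ)
  have hT := one_sub_mk_mul_mk_compositionSum hd0
  have hQ : IsUnit Q := isUnit_iff_constantCoeff.mpr (by simp [Q])
  have hTF : T - 1 = X ^ j * F := hQ.mul_left_cancel <| by
    linear_combination T * hd + (Q + X ^ (j + 1)) * hT -
      X ^ j * one_sub_three_mul_X_add_X_sq_mul_mk_fib_two_mul (R := ℤ)
  have hcoeff := congrArg (coeff n) hTF
  simp only [T, F, map_sub, coeff_mk, coeff_one, if_neg (show n ≠ 0 by omega), sub_zero,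
    coeff_X_pow_mul'] at hcoeff
  refine hcoeff.trans ?_
  split_ifs with hjn hjn'
  · rw [show 2 * n - 2 * (j + 1) + 2 = 2 * (n - j) by omega]
  · simp [show n = j by omega]
  · omega
  · rfl
end

section
/- For every integer n ≥ 1, the number of compositions of n all of whose parts are odd is equal to the Fibonacci number F_n. -/
/-!
Split the odd compositions of `n + 3` by their first part. If it is `1`, deleting it leaves an
odd composition of `n + 2`; otherwise subtracting `2` from it leaves an odd composition of
`n + 1`, and every odd composition of `n + 1` arises this way because it is nonempty. So the
counts satisfy the Fibonacci recurrence, and they start with `1, 1` at `n = 1, 2`.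
-/

open Set

theorem List.modifyHead_injective {α : Type*} {f : α → α} (hf : f.Injective) :
    (List.modifyHead f).Injective := by
  rintro (_ | ⟨a, l⟩) (_ | ⟨b, m⟩) h <;> simp_all [hf.eq_iff]

theorem List.cons_mem_image_modifyHead {α : Type*} {f : α → α} {s : Set (List α)} {a : α}
    {l : List α} : a :: l ∈ List.modifyHead f '' s ↔ ∃ b, f b = a ∧ b :: l ∈ s := by
  constructor
  · rintro ⟨_ | ⟨b, m⟩, hm, h⟩ <;>
      simp only [List.modifyHead_cons, List.modifyHead_nil, List.cons.injEq, reduceCtorEq] at h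
    obtain ⟨rfl, rfl⟩ := h
    exact ⟨b, rfl, hm⟩
  · rintro ⟨b, rfl, hb⟩
    exact ⟨b :: l, hb, rfl⟩

def oddSumLists (n : ℕ) : Set (List ℕ) := {l | l.sum = n ∧ ∀ a ∈ l, Odd a}

lemma range_blocks_oddCompositions (n : ℕ) :
    range (fun c : {c : Composition n // ∀ a ∈ c.blocks, Odd a} ↦ c.1.blocks) =
      oddSumLists n := by
  ext l
  constructor
  · rintro ⟨c, rfl⟩
    exact ⟨c.1.blocks_sum, c.2⟩
  · rintro ⟨hsum, hodd⟩
    exact ⟨⟨⟨l, fun h ↦ (hodd _ h).pos, hsum⟩, hodd⟩, rfl⟩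

lemma oddSumLists_finite (n : ℕ) : (oddSumLists n).Finite :=
  range_blocks_oddCompositions n ▸ finite_range _

lemma card_oddCompositions_eq_ncard (n : ℕ) :
    Nat.card {c : Composition n // ∀ a ∈ c.blocks, Odd a} = (oddSumLists n).ncard := by
  rw [← range_blocks_oddCompositions, ncard_range_of_injective]
  exact fun c d h ↦ Subtype.ext (Composition.ext h)

lemma oddSumLists_zero : oddSumLists 0 = {[]} := by
  ext l
  constructor
  · rintro ⟨hsum, hodd⟩
    exact List.eq_nil_iff_forall_not_mem.2 fun a ha ↦
      (hodd a ha).pos.ne' (List.sum_eq_zero_iff.1 hsum a ha)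
  · rintro rfl
    simp [oddSumLists]

lemma oddSumLists_succ_of_lt_two {n : ℕ} (hn : n < 2) :
    oddSumLists (n + 1) = List.cons 1 '' oddSumLists n := by
  ext (_ | ⟨a, l⟩)
  · simp [oddSumLists]
  · simp only [oddSumLists, mem_ofPred_eq, List.sum_cons, List.mem_cons, forall_eq_or_imp,
      mem_image, List.cons.injEq, exists_eq_right_right]
    constructor
    · rintro ⟨hsum, ⟨k, rfl⟩, hl⟩
      obtain rfl : k = 0 := by omega
      exact ⟨⟨by omega, hl⟩, rfl⟩
    · rintro ⟨⟨hsum, hl⟩, rfl⟩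
      exact ⟨by omega, odd_one, hl⟩

lemma oddSumLists_add_three (n : ℕ) :
    oddSumLists (n + 3) =
      List.cons 1 '' oddSumLists (n + 2) ∪ List.modifyHead (· + 2) '' oddSumLists (n + 1) := by
  ext (_ | ⟨a, l⟩)
  · simp [oddSumLists]
  · rw [mem_union, List.cons_mem_image_modifyHead]
    simp only [oddSumLists, mem_ofPred_eq, List.sum_cons, List.mem_cons, forall_eq_or_imp,
      mem_image, List.cons.injEq, exists_eq_right_right]
    constructor
    · rintro ⟨hsum, ⟨_ | k, rfl⟩, hl⟩
      · exact .inl ⟨⟨by omega, hl⟩, rfl⟩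
      · exact .inr ⟨2 * k + 1, by ring, by omega, odd_two_mul_add_one k, hl⟩
    · rintro (⟨⟨hsum, hl⟩, rfl⟩ | ⟨b, rfl, hsum, hb, hl⟩)
      · exact ⟨by omega, odd_one, hl⟩
      · exact ⟨by omega, hb.add_even even_two, hl⟩

lemma disjoint_cons_one_image_modifyHead_add_two (n m : ℕ) :
    Disjoint (List.cons 1 '' oddSumLists n) (List.modifyHead (· + 2) '' oddSumLists m) := by
  rw [disjoint_left]
  rintro _ ⟨l, -, rfl⟩ h
  obtain ⟨b, hb, -⟩ := List.cons_mem_image_modifyHead.1 h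
  omega

lemma ncard_oddSumLists_add_three (n : ℕ) :
    (oddSumLists (n + 3)).ncard = (oddSumLists (n + 2)).ncard + (oddSumLists (n + 1)).ncard := by
  rw [oddSumLists_add_three, ncard_union_eq (disjoint_cons_one_image_modifyHead_add_two _ _)
      ((oddSumLists_finite _).image _) ((oddSumLists_finite _).image _),
    ncard_image_of_injective _ List.cons_injective,
    ncard_image_of_injective _ (List.modifyHead_injective (add_left_injective 2))]

lemma ncard_oddSumLists_eq_fib : ∀ n : ℕ, (oddSumLists (n + 1)).ncard = Nat.fib (n + 1)
  | 0 => by simp [oddSumLists_succ_of_lt_two, oddSumLists_zero]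
  | 1 => by simp [oddSumLists_succ_of_lt_two, oddSumLists_zero]
  | n + 2 => by
    rw [ncard_oddSumLists_add_three, ncard_oddSumLists_eq_fib (n + 1),
      ncard_oddSumLists_eq_fib n]
    exact (Nat.fib_add_two.trans (add_comm _ _)).symm

theorem card_compositions_odd_parts (n : ℕ) (hn : 1 ≤ n) :
    Nat.card {c : Composition n // ∀ a ∈ c.blocks, Odd a} = Nat.fib n := by
  obtain ⟨m, rfl⟩ := Nat.exists_eq_add_of_le' hn
  rw [card_oddCompositions_eq_ncard, ncard_oddSumLists_eq_fib]
end

section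
/- For every integer n ≥ 0, F_{2n+1} equals the sum, over all compositions (a_1, …, a_k) of n, of 2^{#{i : a_i = 1}}, where #{i : a_i = 1} is the number of parts of the composition equal to 1. -/
/-!
Splitting off the first part `a + 1` of a composition of `n + 1` shows that the weighted count
`W n = ∑ 2 ^ (number of parts equal to 1)` satisfies `W (n + 1) = 2 W n + ∑_{k < n} W k`:
the first part `1` doubles the weight, any other first part leaves a composition of `n - a`.
The odd Fibonacci numbers obey the same recurrence, since
`F (2n + 3) = 2 F (2n + 1) + F (2n)` and `F (2n) = ∑_{k < n} F (2k + 1)`.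
-/

open Finset

namespace Composition

lemma blocks_head_add_sum_tail {n : ℕ} (c : Composition n) (h : c.blocks ≠ []) :
    c.blocks.head h + c.blocks.tail.sum = n := by
  rw [← List.sum_cons, List.cons_head_tail, c.blocks_sum]

def headTailEquiv (n : ℕ) : (Σ a : Fin (n + 1), Composition (n - a)) ≃ Composition (n + 1) where
  toFun p :=
    ⟨(p.1 + 1 : ℕ) :: p.2.blocks,
      fun hi => (List.mem_cons.mp hi).elim (fun h => h ▸ Nat.succ_pos _) p.2.blocks_pos,
      by simp only [List.sum_cons, blocks_sum]; omega⟩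
  invFun c :=
    have hne : c.blocks ≠ [] := by simp
    have hsum := c.blocks_head_add_sum_tail hne
    have hpos : 0 < c.blocks.head hne := c.blocks_pos (List.head_mem hne)
    ⟨⟨c.blocks.head hne - 1, by omega⟩,
      ⟨c.blocks.tail, fun hi => c.blocks_pos (List.mem_of_mem_tail hi), by simp only; omega⟩⟩
  left_inv _ := rfl
  right_inv c := by
    have hne : c.blocks ≠ [] := by simp
    have hpos : 0 < c.blocks.head hne := c.blocks_pos (List.head_mem hne)
    ext1
    conv_rhs => rw [← List.cons_head_tail hne]
    simp only [Nat.sub_add_cancel hpos]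

theorem sum_succ {M : Type*} [AddCommMonoid M] (n : ℕ) (f : List ℕ → M) :
    ∑ c : Composition (n + 1), f c.blocks =
      ∑ a ∈ range (n + 1), ∑ c : Composition (n - a), f ((a + 1) :: c.blocks) := by
  rw [← (headTailEquiv n).sum_comp, Fintype.sum_sigma]
  exact Fin.sum_univ_eq_sum_range (fun a => ∑ c : Composition (n - a), f ((a + 1) :: c.blocks)) _

end Composition

def onesWeightedCard (n : ℕ) : ℕ := ∑ c : Composition n, 2 ^ c.blocks.count 1

lemma onesWeightedCard_zero : onesWeightedCard 0 = 1 := by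
  simp [onesWeightedCard, (Composition.blocks_eq_nil _).mpr rfl, composition_card]

lemma onesWeightedCard_succ (n : ℕ) :
    onesWeightedCard (n + 1) = 2 * onesWeightedCard n + ∑ a ∈ range n, onesWeightedCard a := by
  rw [onesWeightedCard, Composition.sum_succ n (fun l => 2 ^ l.count 1), sum_range_succ', add_comm,
    ← sum_range_reflect onesWeightedCard]
  congr 1
  · simp [onesWeightedCard, mul_sum, pow_succ, mul_comm]
  · refine sum_congr rfl fun a ha => ?_
    rw [show n - 1 - a = n - (a + 1) by simp at ha; omega]
    simp [onesWeightedCard]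

lemma sum_range_fib_two_mul_add_one (n : ℕ) :
    ∑ k ∈ range n, Nat.fib (2 * k + 1) = Nat.fib (2 * n) := by
  induction n with
  | zero => simp
  | succ n ih => rw [sum_range_succ, ih, Nat.mul_succ, Nat.fib_add_two]

lemma fib_two_mul_succ_add_one (n : ℕ) :
    Nat.fib (2 * (n + 1) + 1) = 2 * Nat.fib (2 * n + 1) + ∑ k ∈ range n, Nat.fib (2 * k + 1) := by
  rw [sum_range_fib_two_mul_add_one, show 2 * (n + 1) + 1 = 2 * n + 1 + 2 by ring,
    Nat.fib_add_two, Nat.fib_add_two (n := 2 * n)]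
  ring

lemma onesWeightedCard_eq_fib (n : ℕ) : onesWeightedCard n = Nat.fib (2 * n + 1) := by
  induction n using Nat.strong_induction_on with
  | _ n ih =>
    cases n with
    | zero => simp [onesWeightedCard_zero]
    | succ n =>
      rw [onesWeightedCard_succ, fib_two_mul_succ_add_one, ih n n.lt_succ_self]
      congr 1
      exact sum_congr rfl fun k hk => ih k (by simp at hk; omega)

theorem fib_two_mul_add_one_eq_sum_compositions (n : ℕ) :
    Nat.fib (2 * n + 1) = ∑ c : Composition n, 2 ^ (c.blocks.count 1) :=
  (onesWeightedCard_eq_fib n).symm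
end

section
/- For every integer n ≥ 0, F_{3n+1} equals the sum, over all compositions (a_1, …, a_k) of n, of 3^{#{i : a_i = 1}} · 4^{#{i : a_i ≠ 1}}, where #{i : a_i = 1} is the number of parts equal to 1 and #{i : a_i ≠ 1} is the number of parts greater than 1. -/
/-!
Splitting off the first block writes the weighted count `S (n + 1)` as
`3 * S n + 4 * ∑ j < n, S j`, the first block being `1` exactly when the rest is a composition
of `n`. The Fibonacci side satisfies the same recursion, because
`2 * ∑ j < n, F (3j + 1) = F (3n)` and `F (3n + 4) = 3 F (3n + 1) + 2 F (3n)`.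
-/

open Finset

theorem List.prod_map_ite_eq_pow_count {α M : Type*} [DecidableEq α] [CommMonoid M] (l : List α)
    (a : α) (x y : M) :
    (l.map fun b => if b = a then x else y).prod = x ^ l.count a * y ^ l.countP (· ≠ a) := by
  induction l with
  | nil => simp
  | cons b l ih =>
    by_cases h : b = a <;> simp [h, ih, pow_succ', mul_assoc, mul_left_comm]

namespace Composition

def consBlock (n : ℕ) (p : Σ j : Fin (n + 1), Composition j) : Composition (n + 1) :=
  (append (single (n + 1 - p.1) (by omega)) p.2).cast (by omega)

@[simp]
theorem consBlock_blocks (n : ℕ) (p : Σ j : Fin (n + 1), Composition j) :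
    (consBlock n p).blocks = (n + 1 - p.1) :: p.2.blocks := rfl

theorem consBlock_bijective (n : ℕ) : Function.Bijective (consBlock n) := by
  constructor
  · rintro ⟨j, c⟩ ⟨j', c'⟩ h
    obtain ⟨hj, hc⟩ : n + 1 - j = n + 1 - j' ∧ c.blocks = c'.blocks := by
      simpa using congrArg blocks h
    obtain rfl : j = j' := by omega
    obtain rfl := Composition.ext hc
    rfl
  · rintro ⟨_ | ⟨a, l⟩, hpos, hsum⟩
    · simp at hsum
    · have ha := hpos List.mem_cons_self
      simp only [List.sum_cons] at hsum
      refine ⟨⟨⟨l.sum, by omega⟩, ⟨l, fun hi => hpos (List.mem_cons_of_mem _ hi), rfl⟩⟩, ?_⟩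
      ext1
      simp only [consBlock_blocks]
      congr 1
      omega

variable {R : Type*} [CommSemiring R]

theorem sum_prod_map_blocks_zero (w : ℕ → R) :
    ∑ c : Composition 0, (c.blocks.map w).prod = 1 := by
  have hnil (c : Composition 0) : c.blocks = [] := by simp
  simp [hnil, composition_card]

theorem sum_prod_map_blocks_succ (w : ℕ → R) (n : ℕ) :
    ∑ c : Composition (n + 1), (c.blocks.map w).prod =
      ∑ j ∈ range (n + 1), w (n + 1 - j) * ∑ c : Composition j, (c.blocks.map w).prod := by
  rw [← Fintype.sum_bijective _ (consBlock_bijective n) _ _ fun _ => rfl,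
    ← univ_sigma_univ, sum_sigma, ← Fin.sum_univ_eq_sum_range]
  simp only [consBlock_blocks, List.map_cons, List.prod_cons, mul_sum]

end Composition

namespace Nat

theorem two_mul_sum_fib_three_mul_add_one (n : ℕ) :
    2 * ∑ j ∈ range n, fib (3 * j + 1) = fib (3 * n) := by
  induction n with
  | zero => simp
  | succ n ih =>
    rw [sum_range_succ, mul_add, ih, show 3 * (n + 1) = 3 * n + 1 + 2 by ring,
      fib_add_two, fib_add_two (n := 3 * n)]
    ring

theorem fib_three_mul_add_four (n : ℕ) :
    fib (3 * n + 4) = 3 * fib (3 * n + 1) + 2 * fib (3 * n) := by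
  rw [fib_add_two (n := 3 * n + 2), fib_add_two (n := 3 * n + 1), fib_add_two (n := 3 * n)]
  ring

end Nat

theorem sum_compositions_prod_weight_eq_fib (n : ℕ) :
    ∑ c : Composition n, (c.blocks.map fun a => if a = 1 then 3 else 4).prod =
      Nat.fib (3 * n + 1) := by
  induction n using Nat.strong_induction_on with
  | _ n ih =>
  cases n with
  | zero => exact Composition.sum_prod_map_blocks_zero _
  | succ m =>
    have hlast : m + 1 - m = 1 := by omega
    have hweight : ∀ j ∈ range m, (if m + 1 - j = 1 then 3 else 4) * Nat.fib (3 * j + 1) =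
        4 * Nat.fib (3 * j + 1) := fun j hj => by
      rw [if_neg (by simp at hj; omega)]
    rw [Composition.sum_prod_map_blocks_succ, sum_range_succ,
      sum_congr rfl fun j hj => by rw [ih j (by simp at hj; omega)], ih m m.lt_succ_self,
      sum_congr rfl hweight, ← mul_sum, hlast, if_pos rfl]
    calc 4 * ∑ j ∈ range m, Nat.fib (3 * j + 1) + 3 * Nat.fib (3 * m + 1)
        = 2 * Nat.fib (3 * m) + 3 * Nat.fib (3 * m + 1) := by
          rw [← Nat.two_mul_sum_fib_three_mul_add_one]; ring
      _ = Nat.fib (3 * (m + 1) + 1) := by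
          rw [show 3 * (m + 1) + 1 = 3 * m + 4 by ring, Nat.fib_three_mul_add_four, add_comm]

theorem fib_three_mul_add_one_eq_sum_compositions (n : ℕ) :
    Nat.fib (3 * n + 1) =
      ∑ c : Composition n,
        3 ^ (c.blocks.count 1) * 4 ^ (c.blocks.countP fun a => a ≠ 1) := by
  simp only [← List.prod_map_ite_eq_pow_count, sum_compositions_prod_weight_eq_fib]
end
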